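/- Let D be a derivation on a commutative algebra with Dρ = ρ², Dρ̄ = ρ̄², ρ and ρ̄ invertible. Suppose Dc = 0 (c a constant of integration) and DL₄° = 0. Then L₅ := (ρ̄/ρ)·c - (1/3)·ρ̄·M, where DM = 0, satisfies the equation 3·DL₅ + ρ·M·ρ̄ + 3(ρ - ρ̄)L₅ = 0. (ρ-integration of the second Weyl-Lanczos equation with D = Þ, M = ð̃'L₄°.) -/

import Mathlib

/-!
From `Dρ = ρ²` one gets `D ρ⁻¹ = -1`, hence `D (ρ̄ ρ⁻¹) = (ρ̄ - ρ) ρ̄ ρ⁻¹` and `D (ρ̄ M) = ρ̄ (ρ̄ M)`: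
the `c`-part of `L₅` solves the homogeneous equation `3 DL + 3 (ρ - ρ̄) L = 0`, and the `M`-part
contributes exactly `-ρ ρ̄ M`.
-/

theorem Derivation.map_eq_neg_one_of_mul_eq_one_of_map_eq_sq {R A : Type*} [CommRing R]
    [CommRing A] [Algebra R A] (D : Derivation R A A) {ρ σ : A} (h : ρ * σ = 1)
    (hρ : D ρ = ρ ^ 2) : D σ = -1 := by
  have hσ : D σ = -σ ^ 2 • D ρ := D.leibniz_of_mul_eq_one (mul_comm σ ρ ▸ h)
  rw [hσ, hρ, smul_eq_mul, neg_mul, ← mul_pow, mul_comm σ, h, one_pow]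

/-- ρ-integration of the second Weyl-Lanczos equation: with D a derivation,
Dρ = ρ², Dρ̄ = ρ̄², ρ invertible, c and M in ker D, the element
L₅ = (ρ̄/ρ)c - (1/3)ρ̄M satisfies 3DL₅ + ρMρ̄ + 3(ρ-ρ̄)L₅ = 0. -/
theorem stmt5 {A : Type*} [CommRing A] [Algebra ℚ A] (D : Derivation ℚ A A)
    (ρ ρinv ρbar c M : A) (h1 : ρ * ρinv = 1)
    (hρ : D ρ = ρ ^ 2) (hρbar : D ρbar = ρbar ^ 2)
    (hc : D c = 0) (hM : D M = 0) :
    3 * D (ρbar * ρinv * c - (1/3 : ℚ) • (ρbar * M)) + ρ * M * ρbar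
      + 3 * (ρ - ρbar) * (ρbar * ρinv * c - (1/3 : ℚ) • (ρbar * M)) = 0 := by
  have hρinv : D ρinv = -1 := D.map_eq_neg_one_of_mul_eq_one_of_map_eq_sq h1 hρ
  have hthird : (3 : A) * algebraMap ℚ A (1 / 3) = 1 := by
    rw [← map_ofNat (algebraMap ℚ A) 3, ← map_mul]
    norm_num
  simp only [map_sub, D.map_smul, D.leibniz, hc, hM, hρbar, hρinv, smul_eq_mul]
  simp only [Algebra.smul_def]
  linear_combination 3 * c * ρbar * h1 - ρ * ρbar * M * hthird
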